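/- Define the path z(α) for α ∈ ℝ by z₁(α) = (ν²m²/(2λε) − 3σm⁴/λ) e^{3α}, z₂(α) = (3σm⁶/μ − 3ν²m⁴/(4με)) e^{4α}, z₃(α) = −(νm²/(2ε)) e^{2α}, z₄(α) = e^{−α}, z₅(α) = m² e^{α}. Then for every α ∈ ℝ one has ∂W'/∂z_i(z(α)) = 0 for i = 1, 3, 4, 5 and ∂W'/∂z₂(z(α)) = μ e^{−α}, so that V(z(α)) = μ² e^{−2α}. Hence V(z(α)) → 0 while |z₅(α)| → ∞ as α → +∞: the deformed CDFM model has a runaway direction and inf_{ℂ⁵} V = 0. -/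

import Mathlib

open Complex Filter Topology

/-!
Writing `t = e^α`, the path is `t ↦ (a t³, b t⁴, -c t², t⁻¹, m² t)`, and the coefficients
`a, b, c` are chosen exactly so that every component of `∇W'` except `∂W'/∂z₂ = μ z₄ = μ t⁻¹`
vanishes identically in `t`. Hence `V = μ² e^{-2α} → 0` along the path, while `V ≥ 0` everywhere.
-/

section Gradient

variable {𝕜 ι : Type*} [NontriviallyNormedField 𝕜] [Fintype ι] [DecidableEq ι]

theorem sum_smul_proj_apply_single (g : ι → 𝕜) (j : ι) :
    (∑ i, g i • (ContinuousLinearMap.proj i : (ι → 𝕜) →L[𝕜] 𝕜)) (Pi.single j 1) = g j := by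
  simp [Pi.single_apply]

theorem HasFDerivAt.fderiv_apply_single {f : (ι → 𝕜) → 𝕜} {g : ι → 𝕜} {z : ι → 𝕜}
    (h : HasFDerivAt f (∑ i, g i • (ContinuousLinearMap.proj i : (ι → 𝕜) →L[𝕜] 𝕜)) z) (j : ι) :
    fderiv 𝕜 f z (Pi.single j 1) = g j := by
  rw [h.fderiv, sum_smul_proj_apply_single]

end Gradient

namespace CDFM

variable (lam mu nu m sig eps : ℂ)

def superpotential (z : Fin 5 → ℂ) : ℂ :=
  lam * z 0 * (z 3 * z 4 - m ^ 2) + mu * z 1 * z 3 + nu * z 2 * z 4 + sig * z 4 ^ 3 +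
    eps * z 2 ^ 2 * z 3

def gradient (z : Fin 5 → ℂ) : Fin 5 → ℂ :=
  ![lam * (z 3 * z 4 - m ^ 2),
    mu * z 3,
    nu * z 4 + 2 * eps * z 2 * z 3,
    lam * z 0 * z 4 + mu * z 1 + eps * z 2 ^ 2,
    lam * z 0 * z 3 + nu * z 2 + 3 * sig * z 4 ^ 2]

theorem hasFDerivAt_superpotential (z : Fin 5 → ℂ) :
    HasFDerivAt (superpotential lam mu nu m sig eps)
      (∑ i, gradient lam mu nu m sig eps z i •
        (ContinuousLinearMap.proj i : (Fin 5 → ℂ) →L[ℂ] ℂ)) z := by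
  have h := fun i : Fin 5 => hasFDerivAt_apply (𝕜 := ℂ) i z
  have H := (((((h 0).const_mul lam).mul (((h 3).mul (h 4)).sub_const (m ^ 2))).add
      (((h 1).const_mul mu).mul (h 3))).add (((h 2).const_mul nu).mul (h 4))).add
      (((h 4).pow 3).const_mul sig) |>.add ((((h 2).pow 2).const_mul eps).mul (h 3))
  refine H.congr_fderiv ?_
  ext v
  simp only [Fin.isValue, smul_add, Pi.mul_apply, Nat.add_one_sub_one, nsmul_eq_mul,
    Nat.cast_ofNat, pow_one, add_apply, smul_apply,
    ContinuousLinearMap.proj_apply, smul_eq_mul, gradient, Fin.sum_univ_five,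
    Matrix.cons_val_zero, Matrix.cons_val_one, Matrix.cons_val]
  ring

noncomputable def runawayCurve (t : ℂ) : Fin 5 → ℂ :=
  ![(nu ^ 2 * m ^ 2 / (2 * lam * eps) - 3 * sig * m ^ 4 / lam) * t ^ 3,
    (3 * sig * m ^ 6 / mu - 3 * nu ^ 2 * m ^ 4 / (4 * mu * eps)) * t ^ 4,
    -(nu * m ^ 2 / (2 * eps)) * t ^ 2,
    t⁻¹,
    m ^ 2 * t]

variable {lam mu eps} in
theorem gradient_runawayCurve (hlam : lam ≠ 0) (hmu : mu ≠ 0) (heps : eps ≠ 0) {t : ℂ}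
    (ht : t ≠ 0) :
    gradient lam mu nu m sig eps (runawayCurve lam mu nu m sig eps t) =
      ![0, mu * t⁻¹, 0, 0, 0] := by
  simp only [gradient, runawayCurve, Matrix.cons_val, Matrix.vecCons_inj, and_true]
  refine ⟨?_, trivial, ?_, ?_, ?_⟩ <;> field_simp <;> ring

end CDFM

theorem isGLB_range_of_nonneg_of_tendsto {α β : Type*} {l : Filter β} [l.NeBot] {f : α → ℝ}
    (hf : ∀ x, 0 ≤ f x) {γ : β → α} (hγ : Tendsto (f ∘ γ) l (𝓝 0)) :
    IsGLB (Set.range f) 0 := by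
  refine ⟨Set.forall_mem_range.2 hf, fun b hb => ?_⟩
  exact ge_of_tendsto' hγ fun x => hb ⟨γ x, rfl⟩

theorem deformed_cdfm_runaway_general
    (lam mu nu m sig eps : ℝ)
    (hlam : 0 < lam) (hmu : 0 < mu) (hm : 0 < m) (heps : 0 < eps)
    (W' : (Fin 5 → ℂ) → ℂ)
    (hW : ∀ z, W' z = (lam : ℂ) * z 0 * (z 3 * z 4 - (m : ℂ) ^ 2) +
      (mu : ℂ) * z 1 * z 3 + (nu : ℂ) * z 2 * z 4 + (sig : ℂ) * (z 4) ^ 3 +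
      (eps : ℂ) * (z 2) ^ 2 * z 3)
    (V : (Fin 5 → ℂ) → ℝ)
    (hV : ∀ z, V z = ∑ i, ‖fderiv ℂ W' z (Pi.single i 1)‖ ^ 2)
    (zpath : ℝ → Fin 5 → ℂ)
    (hzpath : ∀ α : ℝ, zpath α =
      ![((nu ^ 2 * m ^ 2 / (2 * lam * eps) - 3 * sig * m ^ 4 / lam : ℝ) : ℂ) *
          Complex.exp (3 * (α : ℂ)),
        ((3 * sig * m ^ 6 / mu - 3 * nu ^ 2 * m ^ 4 / (4 * mu * eps) : ℝ) : ℂ) *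
          Complex.exp (4 * (α : ℂ)),
        -((nu * m ^ 2 / (2 * eps) : ℝ) : ℂ) * Complex.exp (2 * (α : ℂ)),
        Complex.exp (-(α : ℂ)),
        ((m ^ 2 : ℝ) : ℂ) * Complex.exp ((α : ℂ))]) :
    (∀ α : ℝ,
      fderiv ℂ W' (zpath α) (Pi.single 0 1) = 0 ∧
      fderiv ℂ W' (zpath α) (Pi.single 2 1) = 0 ∧
      fderiv ℂ W' (zpath α) (Pi.single 3 1) = 0 ∧
      fderiv ℂ W' (zpath α) (Pi.single 4 1) = 0 ∧
      fderiv ℂ W' (zpath α) (Pi.single 1 1) = (mu : ℂ) * Complex.exp (-(α : ℂ)) ∧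
      V (zpath α) = mu ^ 2 * Real.exp (-2 * α)) ∧
    Tendsto (fun α : ℝ => V (zpath α)) atTop (nhds 0) ∧
    Tendsto (fun α : ℝ => ‖zpath α 4‖) atTop atTop ∧
    IsGLB (Set.range V) 0 := by
  obtain rfl : W' = CDFM.superpotential lam mu nu m sig eps := funext hW
  have hgrad z := (CDFM.hasFDerivAt_superpotential lam mu nu m sig eps z).fderiv_apply_single
  have hcurve (α : ℝ) : zpath α = CDFM.runawayCurve lam mu nu m sig eps (Complex.exp α) := by
    simp only [hzpath, CDFM.runawayCurve, ← Complex.exp_nat_mul, ← Complex.exp_neg]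
    push_cast
    ring_nf
  have hgrad_path (α : ℝ) : CDFM.gradient lam mu nu m sig eps (zpath α) =
      ![0, mu * Complex.exp (-α), 0, 0, 0] := by
    rw [hcurve, CDFM.gradient_runawayCurve _ _ _ (by exact_mod_cast hlam.ne')
      (by exact_mod_cast hmu.ne') (by exact_mod_cast heps.ne') (Complex.exp_ne_zero _),
      Complex.exp_neg]
  have hV_path (α : ℝ) : V (zpath α) = mu ^ 2 * Real.exp (-2 * α) := by
    simp [hV, hgrad, hgrad_path, Fin.sum_univ_five, Complex.norm_exp, mul_pow, ← Real.exp_nat_mul]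
  have hV_tendsto : Tendsto (fun α : ℝ => V (zpath α)) atTop (𝓝 0) := by
    simp only [hV_path]
    simpa using (Real.tendsto_exp_comp_nhds_zero.2
      (tendsto_id.const_mul_atTop_of_neg (by norm_num : (-2 : ℝ) < 0))).const_mul (mu ^ 2)
  refine ⟨fun α => ?_, hV_tendsto, ?_, ?_⟩
  · simp [hgrad, hgrad_path, hV_path]
  · have hnorm (α : ℝ) : ‖zpath α 4‖ = m ^ 2 * Real.exp α := by
      simp [hcurve, CDFM.runawayCurve, Complex.norm_exp]
    simpa only [hnorm] using Real.tendsto_exp_atTop.const_mul_atTop (pow_pos hm 2)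
  · exact isGLB_range_of_nonneg_of_tendsto (fun z => hV z ▸ by positivity) hV_tendsto

/-- Deformed CDFM model `W' = λ z₁(z₄z₅ − m²) + μ z₂z₄ + ν z₃z₅ + σ z₅³
+ ε z₃²z₄` with positive real parameters. Along the path
`z₁(α) = (ν²m²/(2λε) − 3σm⁴/λ) e^{3α}`, `z₂(α) = (3σm⁶/μ − 3ν²m⁴/(4με)) e^{4α}`,
`z₃(α) = −(νm²/(2ε)) e^{2α}`, `z₄(α) = e^{−α}`, `z₅(α) = m² e^{α}`, one has
`∂W'/∂z_i(z(α)) = 0` for `i = 1,3,4,5`, `∂W'/∂z₂(z(α)) = μ e^{−α}`, hence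
`V(z(α)) = μ² e^{−2α}`. Thus `V(z(α)) → 0` while `|z₅(α)| → ∞` as `α → +∞`:
a runaway direction, and `inf V = 0` over `ℂ⁵`. -/
theorem deformed_cdfm_runaway
    (lam mu nu m sig eps : ℝ)
    (hlam : 0 < lam) (hmu : 0 < mu) (hnu : 0 < nu) (hm : 0 < m)
    (hsig : 0 < sig) (heps : 0 < eps)
    (W' : (Fin 5 → ℂ) → ℂ)
    (hW : ∀ z, W' z = (lam : ℂ) * z 0 * (z 3 * z 4 - (m : ℂ) ^ 2) +
      (mu : ℂ) * z 1 * z 3 + (nu : ℂ) * z 2 * z 4 + (sig : ℂ) * (z 4) ^ 3 +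
      (eps : ℂ) * (z 2) ^ 2 * z 3)
    (V : (Fin 5 → ℂ) → ℝ)
    (hV : ∀ z, V z = ∑ i, ‖fderiv ℂ W' z (Pi.single i 1)‖ ^ 2)
    (zpath : ℝ → Fin 5 → ℂ)
    (hzpath : ∀ α : ℝ, zpath α =
      ![((nu ^ 2 * m ^ 2 / (2 * lam * eps) - 3 * sig * m ^ 4 / lam : ℝ) : ℂ) *
          Complex.exp (3 * (α : ℂ)),
        ((3 * sig * m ^ 6 / mu - 3 * nu ^ 2 * m ^ 4 / (4 * mu * eps) : ℝ) : ℂ) *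
          Complex.exp (4 * (α : ℂ)),
        -((nu * m ^ 2 / (2 * eps) : ℝ) : ℂ) * Complex.exp (2 * (α : ℂ)),
        Complex.exp (-(α : ℂ)),
        ((m ^ 2 : ℝ) : ℂ) * Complex.exp ((α : ℂ))]) :
    (∀ α : ℝ,
      fderiv ℂ W' (zpath α) (Pi.single 0 1) = 0 ∧
      fderiv ℂ W' (zpath α) (Pi.single 2 1) = 0 ∧
      fderiv ℂ W' (zpath α) (Pi.single 3 1) = 0 ∧
      fderiv ℂ W' (zpath α) (Pi.single 4 1) = 0 ∧
      fderiv ℂ W' (zpath α) (Pi.single 1 1) = (mu : ℂ) * Complex.exp (-(α : ℂ)) ∧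
      V (zpath α) = mu ^ 2 * Real.exp (-2 * α)) ∧
    Tendsto (fun α : ℝ => V (zpath α)) atTop (nhds 0) ∧
    Tendsto (fun α : ℝ => ‖zpath α 4‖) atTop atTop ∧
    IsGLB (Set.range V) 0 :=
  deformed_cdfm_runaway_general lam mu nu m sig eps hlam hmu hm heps W' hW V hV zpath hzpath
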